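/- Let n ≥ 2, V = ℚⁿ identified with its dual via the standard inner product, and set O₁ = {±e_i ± e_j : 1 ≤ i < j ≤ n}, O₂ = {±2e_i : 1 ≤ i ≤ n}, O_{1/2} = {±e_i : 1 ≤ i ≤ n}. In type C_n take Φ = O₁ ∪ O₂ with coroots Φ∨ = O₁ ∪ O_{1/2}, and base Δ = {e_i − e_{i+1} : 1 ≤ i ≤ n−1} ∪ {2e_n}; in type B_n take Φ = O₁ ∪ O_{1/2} with coroots Φ∨ = O₁ ∪ O₂, and base Δ = {e_i − e_{i+1} : 1 ≤ i ≤ n−1} ∪ {e_n} (in both cases α∨ = 2α/(α,α)). Then in each type, a nonzero Δ-dominant element χ of the weight lattice P is quasi-constant if and only if χ is a positive integer multiple of one of the two fundamental weights corresponding to the extremities of the Dynkin diagram; explicitly, in type C_n these are η(e₁−e₂) = e₁ and η(2e_n) = e₁ + ⋯ + e_n, and in type B_n these are η(e₁−e₂) = e₁ and η(e_n) = (e₁ + ⋯ + e_n)/2. -/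

import Mathlib

namespace QC

open Classical

variable {V : Type*} [AddCommGroup V] [Module ℚ V]

/-- The contragredient action of a linear automorphism `w` of `V` on the dual space,
characterized by `⟨w x, coact w f⟩ = ⟨x, f⟩`, i.e. `(coact w f) x = f (w⁻¹ x)`. -/
noncomputable def coact (w : V ≃ₗ[ℚ] V) (f : Module.Dual ℚ V) : Module.Dual ℚ V :=
  w.symm.dualMap f

/-- The Weyl group of the data `(Φ, co)`: the subgroup of linear automorphisms of `V`
generated by the reflections `s_α : x ↦ x - ⟨x, α∨⟩ α` for `α ∈ Φ`. -/
def weylGroup (Φ : Set V) (co : V → Module.Dual ℚ V) : Subgroup (V ≃ₗ[ℚ] V) :=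
  Subgroup.closure { w : V ≃ₗ[ℚ] V | ∃ α ∈ Φ, ∀ x : V, w x = x - (co α x) • α }

/-- `χ ∈ V` is quasi-constant with respect to a group `G` of automorphisms
(typically the Weyl group, or `W ⋊ Γ`). -/
def IsQuasiConstantWrt (Φ : Set V) (co : V → Module.Dual ℚ V)
    (G : Subgroup (V ≃ₗ[ℚ] V)) (χ : V) : Prop :=
  ∀ α ∈ Φ, co α χ ≠ 0 → ∀ σ, σ ∈ G → coact σ (co α) χ / co α χ ∈ ({-1, 0, 1} : Set ℚ)

/-- `χ ∈ V` is quasi-constant (with respect to the Weyl group). -/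
def IsQuasiConstant (Φ : Set V) (co : V → Module.Dual ℚ V) (χ : V) : Prop :=
  IsQuasiConstantWrt Φ co (weylGroup Φ co) χ

/-- A coweight `μ ∈ V∨` is quasi-constant with respect to a group `G`. -/
def IsQuasiConstantCowtWrt (Φ : Set V) (G : Subgroup (V ≃ₗ[ℚ] V))
    (μ : Module.Dual ℚ V) : Prop :=
  ∀ α ∈ Φ, μ α ≠ 0 → ∀ σ, σ ∈ G → μ (σ α) / μ α ∈ ({-1, 0, 1} : Set ℚ)

/-- A coweight `μ ∈ V∨` is quasi-constant (with respect to the Weyl group). -/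
def IsQuasiConstantCowt (Φ : Set V) (co : V → Module.Dual ℚ V)
    (μ : Module.Dual ℚ V) : Prop :=
  IsQuasiConstantCowtWrt Φ (weylGroup Φ co) μ

/-- `χ ∈ V` is minuscule: `⟨χ, α∨⟩ ∈ {-1,0,1}` for all roots `α`. -/
def IsMinuscule (Φ : Set V) (co : V → Module.Dual ℚ V) (χ : V) : Prop :=
  ∀ α ∈ Φ, co α χ ∈ ({-1, 0, 1} : Set ℚ)

/-- `μ ∈ V∨` is minuscule: `⟨α, μ⟩ ∈ {-1,0,1}` for all roots `α`. -/
def IsMinusculeCowt (Φ : Set V) (μ : Module.Dual ℚ V) : Prop :=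
  ∀ α ∈ Φ, μ α ∈ ({-1, 0, 1} : Set ℚ)

/-- The weight lattice `P = {χ ∈ V : ⟨χ, β∨⟩ ∈ ℤ for all β ∈ Φ}`. -/
def weightLattice (Φ : Set V) (co : V → Module.Dual ℚ V) : Set V :=
  { χ | ∀ β ∈ Φ, ∃ n : ℤ, co β χ = (n : ℚ) }

/-- The coweight lattice `P∨ = {μ ∈ V∨ : ⟨α, μ⟩ ∈ ℤ for all α ∈ Φ}`. -/
def coweightLattice (Φ : Set V) : Set (Module.Dual ℚ V) :=
  { μ | ∀ α ∈ Φ, ∃ n : ℤ, μ α = (n : ℚ) }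

/-- `(Φ, co)` is a reduced root system (not necessarily spanning) in `V`, where
`co α` is the coroot `α∨` viewed as a linear functional, with the Weyl group acting
compatibly on roots and coroots. -/
structure IsRootSystem (Φ : Set V) (co : V → Module.Dual ℚ V) : Prop where
  finite : Φ.Finite
  ne_zero : ∀ α ∈ Φ, α ≠ 0
  pair_self : ∀ α ∈ Φ, co α α = 2
  refl_mem : ∀ α ∈ Φ, ∀ β ∈ Φ, β - (co α β) • α ∈ Φ
  pair_int : ∀ α ∈ Φ, ∀ β ∈ Φ, ∃ n : ℤ, co α β = (n : ℚ)
  reduced : ∀ α ∈ Φ, ∀ c : ℚ, c • α ∈ Φ → c = 1 ∨ c = -1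
  weyl_root : ∀ w, w ∈ weylGroup Φ co → ∀ α ∈ Φ, w α ∈ Φ
  weyl_coroot : ∀ w, w ∈ weylGroup Φ co → ∀ α ∈ Φ, co (w α) = coact w (co α)

/-- `Φ` is irreducible: it is nonempty and admits no nontrivial orthogonal decomposition. -/
def IsIrreducible (Φ : Set V) (co : V → Module.Dual ℚ V) : Prop :=
  Φ.Nonempty ∧ ∀ Ψ ⊆ Φ, (∀ α ∈ Ψ, ∀ β ∈ Φ \ Ψ, co α β = 0) → Ψ = ∅ ∨ Ψ = Φ

/-- `Δ` is a base (set of simple roots) of `Φ`. -/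
structure IsBase (Φ : Set V) (co : V → Module.Dual ℚ V) (Δ : Set V) : Prop where
  subset : Δ ⊆ Φ
  indep : LinearIndependent ℚ ((↑) : Δ → V)
  span_eq : Submodule.span ℚ Δ = Submodule.span ℚ Φ
  decomp : ∀ α ∈ Φ, ∃ c : V →₀ ℕ, ↑c.support ⊆ Δ ∧
      (α = c.sum (fun v n => (n : ℚ) • v) ∨ α = - c.sum (fun v n => (n : ℚ) • v))

/-- `η` is the fundamental weight `η(α)` for the simple root `α ∈ Δ`:
`⟨η, β∨⟩ = δ_{αβ}` for `β ∈ Δ`. -/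
def IsFundWeight (co : V → Module.Dual ℚ V) (Δ : Set V) (α : V) (η : V) : Prop :=
  ∀ β ∈ Δ, co β η = if β = α then 1 else 0

/-- `f` is the fundamental coweight `η(α∨)` for the simple root `α ∈ Δ`:
`⟨β, f⟩ = δ_{αβ}` for `β ∈ Δ`. -/
def IsFundCoweight (Δ : Set V) (α : V) (f : Module.Dual ℚ V) : Prop :=
  ∀ β ∈ Δ, f β = if β = α then 1 else 0

/-- `χ` is cominuscule: `χ = η(α)` for some base `Δ` and `α ∈ Δ` such that the
fundamental coweight `η(α∨)` is minuscule. -/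
def IsCominuscule (Φ : Set V) (co : V → Module.Dual ℚ V) (χ : V) : Prop :=
  χ ∈ Submodule.span ℚ Φ ∧
  ∃ Δ : Set V, IsBase Φ co Δ ∧ ∃ α ∈ Δ, IsFundWeight co Δ α χ ∧
    ∀ f : Module.Dual ℚ V, IsFundCoweight Δ α f → IsMinusculeCowt Φ f

/-- `μ` is a cominuscule coweight: `μ = η(α∨)` for some base `Δ` and `α ∈ Δ` such that
the fundamental weight `η(α)` is minuscule. -/
def IsCominusculeCowt (Φ : Set V) (co : V → Module.Dual ℚ V)
    (μ : Module.Dual ℚ V) : Prop :=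
  ∃ Δ : Set V, IsBase Φ co Δ ∧ ∃ α ∈ Δ, IsFundCoweight Δ α μ ∧
    ∀ η : V, IsFundWeight co Δ α η → IsMinuscule Φ co η

/-- `χ` is `Δ`-dominant. -/
def IsDominant (co : V → Module.Dual ℚ V) (Δ : Set V) (χ : V) : Prop :=
  ∀ α ∈ Δ, 0 ≤ co α χ

/-- `μ ∈ V∨` is `Δ`-dominant. -/
def IsDominantCowt (Δ : Set V) (μ : Module.Dual ℚ V) : Prop :=
  ∀ α ∈ Δ, 0 ≤ μ α

/-- `χ` is orbitally `p`-close. -/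
def IsOrbitallyPClose (Φ : Set V) (co : V → Module.Dual ℚ V) (p : ℕ) (χ : V) : Prop :=
  ∀ α ∈ Φ, co α χ ≠ 0 → ∀ w, w ∈ weylGroup Φ co →
    |coact w (co α) χ / co α χ| ≤ (p : ℚ) - 1

end QC

namespace QC

/-- The linear functional `y ↦ ∑ i, x i * y i` given by the standard inner product. -/
noncomputable def dotF (n : ℕ) (x : Fin n → ℚ) : Module.Dual ℚ (Fin n → ℚ) :=
  ∑ i, x i • LinearMap.proj i

/-- The coroot `α∨ = 2α/(α,α)` of `α`, as a linear functional via the standard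
inner product. -/
noncomputable def stdCoroot (n : ℕ) (α : Fin n → ℚ) : Module.Dual ℚ (Fin n → ℚ) :=
  (2 / dotF n α α) • dotF n α

/-- The `i`-th standard basis vector `eᵢ` of `ℚⁿ`. -/
def eVec (n : ℕ) (i : Fin n) : Fin n → ℚ := Pi.single i 1

end QC

namespace QC

/-- The roots `±eᵢ ± eⱼ` (`i ≠ j`). -/
def o1 (n : ℕ) : Set (Fin n → ℚ) :=
  {v | ∃ i j : Fin n, i ≠ j ∧ ∃ s t : ℚ, (s = 1 ∨ s = -1) ∧ (t = 1 ∨ t = -1) ∧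
      v = s • eVec _ i + t • eVec _ j}

/-- The roots `±eᵢ`. -/
def oShort (n : ℕ) : Set (Fin n → ℚ) :=
  {v | ∃ i : Fin n, v = eVec _ i ∨ v = -eVec _ i}

/-- The roots `±2eᵢ`. -/
def oLong (n : ℕ) : Set (Fin n → ℚ) :=
  {v | ∃ i : Fin n, v = (2 : ℚ) • eVec _ i ∨ v = -((2 : ℚ) • eVec _ i)}

/-- Type `Cₙ` roots: `O₁ ∪ O₂`. -/
def cnΦ (n : ℕ) : Set (Fin n → ℚ) := o1 n ∪ oLong n

/-- Type `Bₙ` roots: `O₁ ∪ O_{1/2}`. -/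
def bnΦ (n : ℕ) : Set (Fin n → ℚ) := o1 n ∪ oShort n

/-- The simple roots `eᵢ − e_{i+1}` (`1 ≤ i ≤ n−1`). -/
def deltaA (n : ℕ) : Set (Fin n → ℚ) :=
  {v | ∃ i j : Fin n, (j : ℕ) = (i : ℕ) + 1 ∧ v = eVec _ i - eVec _ j}

/-- The base of type `Cₙ`: `{eᵢ − e_{i+1}} ∪ {2eₙ}`. -/
def cnΔ (n : ℕ) : Set (Fin n → ℚ) :=
  deltaA n ∪ {v | ∃ i : Fin n, (i : ℕ) = n - 1 ∧ v = (2 : ℚ) • eVec _ i}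

/-- The base of type `Bₙ`: `{eᵢ − e_{i+1}} ∪ {eₙ}`. -/
def bnΔ (n : ℕ) : Set (Fin n → ℚ) :=
  deltaA n ∪ {v | ∃ i : Fin n, (i : ℕ) = n - 1 ∧ v = eVec _ i}

end QC

namespace QC

open Finset

variable {n : ℕ}

/-- concrete dot product -/
def dd {n : ℕ} (x y : Fin n → ℚ) : ℚ := ∑ i, x i * y i

lemma dd_comm (x y : Fin n → ℚ) : dd x y = dd y x :=
  Finset.sum_congr rfl fun i _ => mul_comm _ _

lemma dd_sub_left (x y z : Fin n → ℚ) : dd (x - y) z = dd x z - dd y z := by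
  simp [dd, sub_mul, Finset.sum_sub_distrib]

lemma dd_add_left (x y z : Fin n → ℚ) : dd (x + y) z = dd x z + dd y z := by
  simp [dd, add_mul, Finset.sum_add_distrib]

lemma dd_smul_left (c : ℚ) (x y : Fin n → ℚ) : dd (c • x) y = c * dd x y := by
  simp [dd, Finset.mul_sum, mul_assoc]

lemma dd_sub_right (x y z : Fin n → ℚ) : dd x (y - z) = dd x y - dd x z := by
  rw [dd_comm, dd_sub_left, dd_comm y x, dd_comm z x]

lemma dd_add_right (x y z : Fin n → ℚ) : dd x (y + z) = dd x y + dd x z := by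
  rw [dd_comm, dd_add_left, dd_comm y x, dd_comm z x]

lemma dd_smul_right (c : ℚ) (x y : Fin n → ℚ) : dd x (c • y) = c * dd x y := by
  rw [dd_comm, dd_smul_left, dd_comm y x]

lemma eVec_same (i : Fin n) : eVec n i i = 1 := by simp [eVec]

lemma eVec_ne {i j : Fin n} (h : j ≠ i) : eVec n i j = 0 := by
  simp [eVec, Pi.single_eq_of_ne h]

lemma dd_eVec_left (i : Fin n) (y : Fin n → ℚ) : dd (eVec n i) y = y i := by
  simp [dd, eVec, Pi.single_apply, ite_mul]

lemma dd_eVec_right (x : Fin n → ℚ) (i : Fin n) : dd x (eVec n i) = x i := by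
  rw [dd_comm, dd_eVec_left]

lemma dotF_apply (x y : Fin n → ℚ) : dotF n x y = dd x y := by
  simp [dotF, dd]

lemma stdCoroot_apply (α x : Fin n → ℚ) : stdCoroot n α x = 2 / dd α α * dd α x := by
  simp [stdCoroot, dotF_apply]

end QC
namespace QC

variable {n : ℕ}

/-- integral vector -/
def IntVec (v : Fin n → ℚ) : Prop := ∀ i, ∃ k : ℤ, v i = (k : ℚ)

lemma IntVec.dd_int {x y : Fin n → ℚ} (hx : IntVec x) (hy : IntVec y) :
    ∃ k : ℤ, dd x y = (k : ℚ) := by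
  choose a ha using hx; choose b hb using hy
  refine ⟨∑ i, a i * b i, ?_⟩
  rw [dd]; push_cast
  exact Finset.sum_congr rfl fun i _ => by rw [ha, hb]

lemma IntVec.sub_zsmul {x y : Fin n → ℚ} (hx : IntVec x) (hy : IntVec y) (k : ℤ) :
    IntVec (x - (k : ℚ) • y) := by
  intro i
  obtain ⟨a, ha⟩ := hx i; obtain ⟨b, hb⟩ := hy i
  refine ⟨a - k * b, ?_⟩
  simp only [Pi.sub_apply, Pi.smul_apply, smul_eq_mul, ha, hb]
  push_cast; ring

lemma sq_nonneg' (t : ℚ) : 0 ≤ t * t := mul_self_nonneg t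

/-- classification of integral vectors of norm 1 -/
lemma norm_one_classify {v : Fin n → ℚ} (hv : IntVec v) (h : dd v v = 1) :
    ∃ i, v = eVec n i ∨ v = -eVec n i := by
  have hex : ∃ i, v i ≠ 0 := by
    by_contra hc
    push_neg at hc
    rw [dd] at h; simp [hc] at h
  obtain ⟨i, hi⟩ := hex
  have hsplit : v i * v i + ∑ j ∈ Finset.univ.erase i, v j * v j = 1 :=
    (Finset.add_sum_erase _ (fun j => v j * v j) (Finset.mem_univ i)).trans h
  have htail : (0:ℚ) ≤ ∑ j ∈ Finset.univ.erase i, v j * v j :=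
    Finset.sum_nonneg fun j _ => sq_nonneg' _
  obtain ⟨k, hk⟩ := hv i
  have hk0 : k ≠ 0 := by rintro rfl; simp [hk] at hi
  have hkk : (k:ℚ) * k ≤ 1 := by rw [← hk]; linarith
  have hkk' : k * k ≤ 1 := by exact_mod_cast hkk
  have hk1 : k = 1 ∨ k = -1 := by
    rcases lt_trichotomy k 0 with h1 | h1 | h1
    · right; nlinarith
    · omega
    · left; nlinarith
  have hvi : v i * v i = 1 := by
    rw [hk]; rcases hk1 with rfl | rfl <;> norm_num
  have htail0 : ∑ j ∈ Finset.univ.erase i, v j * v j = 0 := by linarith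
  have hzero : ∀ j, j ≠ i → v j = 0 := by
    intro j hj
    have := (Finset.sum_eq_zero_iff_of_nonneg fun j _ => sq_nonneg' (v j)).1 htail0 j
      (Finset.mem_erase.2 ⟨hj, Finset.mem_univ j⟩)
    exact mul_self_eq_zero.1 this
  refine ⟨i, ?_⟩
  rcases hk1 with rfl | rfl
  · left; funext j
    by_cases hj : j = i
    · subst hj; rw [hk, eVec_same]; norm_num
    · rw [hzero j hj, eVec_ne hj]
  · right; funext j
    by_cases hj : j = i
    · subst hj; rw [hk]; simp [eVec_same]
    · rw [hzero j hj]; simp [eVec_ne hj]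

/-- classification of integral vectors of norm 2 -/
lemma norm_two_classify {v : Fin n → ℚ} (hv : IntVec v) (h : dd v v = 2) :
    ∃ i j : Fin n, i ≠ j ∧ ∃ s t : ℚ, (s = 1 ∨ s = -1) ∧ (t = 1 ∨ t = -1) ∧
      v = s • eVec n i + t • eVec n j := by
  have hex : ∃ i, v i ≠ 0 := by
    by_contra hc
    push_neg at hc
    rw [dd] at h; simp [hc] at h
  obtain ⟨i, hi⟩ := hex
  have hsplit : v i * v i + ∑ j ∈ Finset.univ.erase i, v j * v j = 2 :=
    (Finset.add_sum_erase _ (fun j => v j * v j) (Finset.mem_univ i)).trans h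
  obtain ⟨k, hk⟩ := hv i
  have hk0 : k ≠ 0 := by rintro rfl; simp [hk] at hi
  have hkk : (k:ℚ) * k ≤ 2 := by
    have : (0:ℚ) ≤ ∑ j ∈ Finset.univ.erase i, v j * v j :=
      Finset.sum_nonneg fun j _ => sq_nonneg' _
    rw [← hk]; linarith
  have hkk' : k * k ≤ 2 := by exact_mod_cast hkk
  have hk1 : k = 1 ∨ k = -1 := by
    rcases lt_trichotomy k 0 with h1 | h1 | h1
    · right; nlinarith
    · omega
    · left; nlinarith
  have hvi : v i * v i = 1 := by
    rw [hk]; rcases hk1 with rfl | rfl <;> norm_num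
  have htail1 : ∑ j ∈ Finset.univ.erase i, v j * v j = 1 := by linarith
  -- find second index
  have hex2 : ∃ j ∈ Finset.univ.erase i, v j ≠ 0 := by
    by_contra hc
    push_neg at hc
    rw [Finset.sum_eq_zero (fun j hj => by rw [hc j hj]; ring)] at htail1
    norm_num at htail1
  obtain ⟨j, hjmem, hj⟩ := hex2
  have hji : j ≠ i := (Finset.mem_erase.1 hjmem).1
  have hsplit2 : v j * v j + ∑ l ∈ (Finset.univ.erase i).erase j, v l * v l = 1 :=
    (Finset.add_sum_erase _ (fun l => v l * v l) hjmem).trans htail1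
  obtain ⟨m, hm⟩ := hv j
  have hm0 : m ≠ 0 := by rintro rfl; simp [hm] at hj
  have hmm : (m:ℚ) * m ≤ 1 := by
    have : (0:ℚ) ≤ ∑ l ∈ (Finset.univ.erase i).erase j, v l * v l :=
      Finset.sum_nonneg fun l _ => sq_nonneg' _
    rw [← hm]; linarith
  have hmm' : m * m ≤ 1 := by exact_mod_cast hmm
  have hm1 : m = 1 ∨ m = -1 := by
    rcases lt_trichotomy m 0 with h1 | h1 | h1
    · right; nlinarith
    · omega
    · left; nlinarith
  have hvj : v j * v j = 1 := by
    rw [hm]; rcases hm1 with rfl | rfl <;> norm_num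
  have htail0 : ∑ l ∈ (Finset.univ.erase i).erase j, v l * v l = 0 := by linarith
  have hzero : ∀ l, l ≠ i → l ≠ j → v l = 0 := by
    intro l hli hlj
    have := (Finset.sum_eq_zero_iff_of_nonneg fun l _ => sq_nonneg' (v l)).1 htail0 l
      (Finset.mem_erase.2 ⟨hlj, Finset.mem_erase.2 ⟨hli, Finset.mem_univ l⟩⟩)
    exact mul_self_eq_zero.1 this
  refine ⟨i, j, Ne.symm hji, v i, v j, ?_, ?_, ?_⟩
  · rw [hk]; rcases hk1 with rfl | rfl
    · left; norm_num
    · right; norm_num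
  · rw [hm]; rcases hm1 with rfl | rfl
    · left; norm_num
    · right; norm_num
  · funext l
    by_cases hli : l = i
    · subst hli
      simp [eVec_same, eVec_ne hji, eVec_ne (Ne.symm hji), smul_eq_mul]
    · by_cases hlj : l = j
      · subst hlj
        simp [eVec_same, eVec_ne hji, eVec_ne (Ne.symm hji), eVec_ne hli, smul_eq_mul]
      · rw [hzero l hli hlj]
        simp [eVec_ne (fun h => hli h), eVec_ne (fun h => hlj h), smul_eq_mul]

end QC
namespace QC

variable {n : ℕ}

def EvenVec (v : Fin n → ℚ) : Prop := ∀ i, ∃ k : ℤ, v i = 2 * (k : ℚ)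

lemma dd_neg_left (x y : Fin n → ℚ) : dd (-x) y = -dd x y := by
  simp [dd, neg_mul]

lemma dd_neg_right (x y : Fin n → ℚ) : dd x (-y) = -dd x y := by
  rw [dd_comm, dd_neg_left, dd_comm y x]

lemma dd_pm_left (i j : Fin n) (s t : ℚ) (y : Fin n → ℚ) :
    dd (s • eVec n i + t • eVec n j) y = s * y i + t * y j := by
  rw [dd_add_left, dd_smul_left, dd_smul_left, dd_eVec_left, dd_eVec_left]

lemma pm_apply_i {i j : Fin n} (hij : i ≠ j) (s t : ℚ) :
    (s • eVec n i + t • eVec n j) i = s := by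
  simp [eVec_same, eVec_ne hij, smul_eq_mul]

lemma pm_apply_j {i j : Fin n} (hij : i ≠ j) (s t : ℚ) :
    (s • eVec n i + t • eVec n j) j = t := by
  simp [eVec_same, eVec_ne (Ne.symm hij), smul_eq_mul]

lemma o1_norm {v : Fin n → ℚ} (h : v ∈ o1 n) : dd v v = 2 := by
  obtain ⟨i, j, hij, s, t, hs, ht, rfl⟩ := h
  rw [dd_pm_left, pm_apply_i hij, pm_apply_j hij]
  rcases hs with rfl | rfl <;> rcases ht with rfl | rfl <;> norm_num

lemma o1_int {v : Fin n → ℚ} (h : v ∈ o1 n) : IntVec v := by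
  obtain ⟨i, j, hij, s, t, hs, ht, rfl⟩ := h
  intro l
  by_cases h1 : l = i
  · subst h1
    rw [pm_apply_i hij]
    rcases hs with rfl | rfl
    · exact ⟨1, by norm_num⟩
    · exact ⟨-1, by norm_num⟩
  · by_cases h2 : l = j
    · subst h2
      rw [pm_apply_j hij]
      rcases ht with rfl | rfl
      · exact ⟨1, by norm_num⟩
      · exact ⟨-1, by norm_num⟩
    · exact ⟨0, by simp [eVec_ne h1, eVec_ne h2, smul_eq_mul]⟩

lemma o1_char {v : Fin n → ℚ} : v ∈ o1 n ↔ IntVec v ∧ dd v v = 2 :=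
  ⟨fun h => ⟨o1_int h, o1_norm h⟩, fun ⟨h1, h2⟩ => norm_two_classify h1 h2⟩

lemma dd_eVec_self (i : Fin n) : dd (eVec n i) (eVec n i) = 1 := by
  rw [dd_eVec_left, eVec_same]

lemma oShort_norm {v : Fin n → ℚ} (h : v ∈ oShort n) : dd v v = 1 := by
  obtain ⟨i, rfl | rfl⟩ := h
  · exact dd_eVec_self i
  · rw [dd_neg_left, dd_neg_right, dd_eVec_self]; norm_num

lemma oShort_int {v : Fin n → ℚ} (h : v ∈ oShort n) : IntVec v := by
  obtain ⟨i, rfl | rfl⟩ := h <;> intro l <;> by_cases h1 : l = i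
  · exact ⟨1, by subst h1; rw [eVec_same]; norm_num⟩
  · exact ⟨0, by rw [eVec_ne h1]; norm_num⟩
  · exact ⟨-1, by subst h1; simp [eVec_same]⟩
  · exact ⟨0, by simp [eVec_ne h1]⟩

lemma oShort_char {v : Fin n → ℚ} : v ∈ oShort n ↔ IntVec v ∧ dd v v = 1 :=
  ⟨fun h => ⟨oShort_int h, oShort_norm h⟩, fun ⟨h1, h2⟩ => norm_one_classify h1 h2⟩

lemma oLong_norm {v : Fin n → ℚ} (h : v ∈ oLong n) : dd v v = 4 := by
  obtain ⟨i, rfl | rfl⟩ := h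
  · rw [dd_smul_left, dd_smul_right, dd_eVec_self]; norm_num
  · rw [dd_neg_left, dd_neg_right, dd_smul_left, dd_smul_right, dd_eVec_self]; norm_num

lemma oLong_even {v : Fin n → ℚ} (h : v ∈ oLong n) : EvenVec v := by
  obtain ⟨i, rfl | rfl⟩ := h <;> intro l <;> by_cases h1 : l = i
  · exact ⟨1, by subst h1; simp [eVec_same]⟩
  · exact ⟨0, by simp [eVec_ne h1]⟩
  · exact ⟨-1, by subst h1; simp [eVec_same]⟩
  · exact ⟨0, by simp [eVec_ne h1]⟩

lemma oLong_char {v : Fin n → ℚ} : v ∈ oLong n ↔ EvenVec v ∧ dd v v = 4 := by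
  refine ⟨fun h => ⟨oLong_even h, oLong_norm h⟩, fun ⟨h1, h2⟩ => ?_⟩
  choose k hk using h1
  set w : Fin n → ℚ := fun i => (k i : ℚ) with hw
  have hvw : v = (2 : ℚ) • w := by
    funext l; rw [hk l]; simp [hw]
  have hww : dd w w = 1 := by
    have : dd v v = 4 * dd w w := by
      rw [hvw, dd_smul_left, dd_smul_right]; ring
    rw [h2] at this; linarith
  obtain ⟨i, hi | hi⟩ := norm_one_classify (fun l => ⟨k l, rfl⟩) hww
  · exact ⟨i, Or.inl (by rw [hvw]; rw [show w = eVec n i from hi])⟩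
  · exact ⟨i, Or.inr (by rw [hvw]; rw [show w = -eVec n i from hi]; module)⟩

end QC
namespace QC

variable {n : ℕ}

/-- the reflection in `α` as a linear map -/
noncomputable def reflL (n : ℕ) (α : Fin n → ℚ) : (Fin n → ℚ) →ₗ[ℚ] (Fin n → ℚ) :=
  LinearMap.id - (stdCoroot n α).smulRight α

lemma reflL_apply (α x : Fin n → ℚ) : reflL n α x = x - stdCoroot n α x • α := rfl

lemma reflL_invol (α : Fin n → ℚ) (h : dd α α ≠ 0) (x : Fin n → ℚ) :
    reflL n α (reflL n α x) = x := by
  rw [reflL_apply, reflL_apply]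
  have hc : stdCoroot n α (x - stdCoroot n α x • α) = - stdCoroot n α x := by
    simp only [stdCoroot_apply, dd_sub_right, dd_smul_right]
    field_simp
    ring
  rw [hc]
  module

/-- the reflection in `α` as a linear equivalence -/
noncomputable def reflE (n : ℕ) (α : Fin n → ℚ) (h : dd α α ≠ 0) :
    (Fin n → ℚ) ≃ₗ[ℚ] (Fin n → ℚ) :=
  LinearEquiv.ofLinear (reflL n α) (reflL n α)
    (LinearMap.ext fun x => reflL_invol α h x) (LinearMap.ext fun x => reflL_invol α h x)

lemma reflE_apply (α : Fin n → ℚ) (h : dd α α ≠ 0) (x : Fin n → ℚ) :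
    reflE n α h x = x - stdCoroot n α x • α := rfl

lemma reflE_symm_apply (α : Fin n → ℚ) (h : dd α α ≠ 0) (x : Fin n → ℚ) :
    (reflE n α h).symm x = x - stdCoroot n α x • α := rfl

lemma reflE_mem {Φ : Set (Fin n → ℚ)} {α : Fin n → ℚ} (hα : α ∈ Φ) (h : dd α α ≠ 0) :
    reflE n α h ∈ weylGroup Φ (stdCoroot n) :=
  Subgroup.subset_closure ⟨α, hα, fun _ => rfl⟩

lemma coact_apply (w : (Fin n → ℚ) ≃ₗ[ℚ] (Fin n → ℚ)) (f : Module.Dual ℚ (Fin n → ℚ))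
    (x : Fin n → ℚ) : coact w f x = f (w.symm x) := rfl

/-- every Weyl group element is a `dd`-isometry mapping `Φ` into itself -/
lemma weyl_isom_maps {Φ : Set (Fin n → ℚ)} (hfin : Φ.Finite)
    (hnz : ∀ α ∈ Φ, dd α α ≠ 0)
    (hcl : ∀ α ∈ Φ, ∀ β ∈ Φ, β - stdCoroot n α β • α ∈ Φ) :
    ∀ σ, σ ∈ weylGroup Φ (stdCoroot n) →
      (∀ x y, dd (σ x) (σ y) = dd x y) ∧ Set.MapsTo σ Φ Φ := by
  intro σ hσ
  refine Subgroup.closure_induction ?_ ?_ ?_ ?_ hσ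
  · rintro w ⟨α, hαΦ, hw⟩
    have hα := hnz α hαΦ
    constructor
    · intro x y
      rw [hw, hw, dd_sub_left, dd_sub_right, dd_sub_right, dd_smul_left, dd_smul_right,
        dd_smul_right, dd_smul_left, stdCoroot_apply, stdCoroot_apply, dd_comm x α]
      field_simp
      ring
    · intro β hβ
      rw [hw]
      exact hcl α hαΦ β hβ
  · exact ⟨fun x y => rfl, fun β hβ => hβ⟩
  · rintro x y _ _ ⟨hx1, hx2⟩ ⟨hy1, hy2⟩
    exact ⟨fun a b => by
      have : dd ((x * y) a) ((x * y) b) = dd (x (y a)) (x (y b)) := rfl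
      rw [this, hx1, hy1], fun β hβ => hx2 (hy2 hβ)⟩
  · rintro x _ ⟨hx1, hx2⟩
    have hinv : ∀ v, x (x⁻¹ v) = v := fun v => x.apply_symm_apply v
    refine ⟨fun a b => by rw [← hx1 (x⁻¹ a) (x⁻¹ b), hinv, hinv], ?_⟩
    have hbij : Set.BijOn x Φ Φ :=
      (Set.Finite.injOn_iff_bijOn_of_mapsTo hfin hx2).1 (x.injective.injOn)
    intro β hβ
    obtain ⟨γ, hγΦ, hγ⟩ := hbij.surjOn hβ
    have : x⁻¹ β = γ := by rw [← hγ]; exact x.symm_apply_apply γ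
    rw [this]  -- x⁻¹ β ∈ Φ
    exact hγΦ

end QC
namespace QC

variable {n : ℕ}

lemma refl_norm (α β : Fin n → ℚ) (h : dd α α ≠ 0) :
    dd (β - stdCoroot n α β • α) (β - stdCoroot n α β • α) = dd β β := by
  simp only [stdCoroot_apply, dd_sub_left, dd_sub_right, dd_smul_left, dd_smul_right]
  rw [dd_comm β α]
  field_simp
  ring

lemma EvenVec.toInt {v : Fin n → ℚ} (h : EvenVec v) : IntVec v := by
  intro i; obtain ⟨k, hk⟩ := h i; exact ⟨2 * k, by rw [hk]; push_cast; ring⟩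

lemma dd_int_even {x y : Fin n → ℚ} (hx : IntVec x) (hy : EvenVec y) :
    ∃ k : ℤ, dd x y = 2 * (k : ℚ) := by
  choose a ha using hx; choose b hb using hy
  refine ⟨∑ i, a i * b i, ?_⟩
  rw [dd]; push_cast; rw [Finset.mul_sum]
  exact Finset.sum_congr rfl fun i _ => by rw [ha, hb]; push_cast; ring

lemma dd_even_even {x y : Fin n → ℚ} (hx : EvenVec x) (hy : EvenVec y) :
    ∃ k : ℤ, dd x y = 4 * (k : ℚ) := by
  choose a ha using hx; choose b hb using hy
  refine ⟨∑ i, a i * b i, ?_⟩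
  rw [dd]; push_cast; rw [Finset.mul_sum]
  exact Finset.sum_congr rfl fun i _ => by rw [ha, hb]; push_cast; ring

lemma EvenVec.sub_zsmul {x y : Fin n → ℚ} (hx : EvenVec x) (hy : EvenVec y) (k : ℤ) :
    EvenVec (x - (k : ℚ) • y) := by
  intro i
  obtain ⟨a, ha⟩ := hx i; obtain ⟨b, hb⟩ := hy i
  refine ⟨a - k * b, ?_⟩
  simp only [Pi.sub_apply, Pi.smul_apply, smul_eq_mul, ha, hb]
  push_cast; ring

lemma cn_hnz : ∀ α ∈ cnΦ n, dd α α ≠ 0 := by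
  rintro α (h | h)
  · rw [o1_norm h]; norm_num
  · rw [oLong_norm h]; norm_num

lemma bn_hnz : ∀ α ∈ bnΦ n, dd α α ≠ 0 := by
  rintro α (h | h)
  · rw [o1_norm h]; norm_num
  · rw [oShort_norm h]; norm_num

lemma cn_closed : ∀ α ∈ cnΦ n, ∀ β ∈ cnΦ n, β - stdCoroot n α β • α ∈ cnΦ n := by
  rintro α hα β hβ
  have hnorm := refl_norm α β (cn_hnz α hα)
  rcases hα with hα | hα
  · have hc : stdCoroot n α β = dd α β := by
      rw [stdCoroot_apply, o1_norm hα]; norm_num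
    rcases hβ with hβ | hβ
    · obtain ⟨k, hk⟩ := IntVec.dd_int (o1_int hα) (o1_int hβ)
      left
      rw [o1_char]
      refine ⟨?_, by rw [hnorm, o1_norm hβ]⟩
      rw [hc, hk]
      exact IntVec.sub_zsmul (o1_int hβ) (o1_int hα) k
    · obtain ⟨k, hk⟩ := dd_int_even (o1_int hα) (oLong_even hβ)
      right
      rw [oLong_char]
      refine ⟨?_, by rw [hnorm, oLong_norm hβ]⟩
      rw [hc, hk]
      intro i
      obtain ⟨b, hb⟩ := oLong_even hβ i
      obtain ⟨a, ha⟩ := o1_int hα i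
      refine ⟨b - k * a, ?_⟩
      simp only [Pi.sub_apply, Pi.smul_apply, smul_eq_mul, ha, hb]
      push_cast; ring
  · rcases hβ with hβ | hβ
    · obtain ⟨k, hk⟩ := dd_int_even (o1_int hβ) (oLong_even hα)
      rw [dd_comm] at hk
      have hc : stdCoroot n α β = (k : ℚ) := by
        rw [stdCoroot_apply, oLong_norm hα, hk]; ring
      left
      rw [o1_char]
      refine ⟨?_, by rw [hnorm, o1_norm hβ]⟩
      rw [hc]
      exact IntVec.sub_zsmul (o1_int hβ) (EvenVec.toInt (oLong_even hα)) k
    · obtain ⟨k, hk⟩ := dd_even_even (oLong_even hα) (oLong_even hβ)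
      have hc : stdCoroot n α β = ((2 * k : ℤ) : ℚ) := by
        rw [stdCoroot_apply, oLong_norm hα, hk]; push_cast; ring
      right
      rw [oLong_char]
      refine ⟨?_, by rw [hnorm, oLong_norm hβ]⟩
      rw [hc]
      exact EvenVec.sub_zsmul (oLong_even hβ) (oLong_even hα) (2 * k)

lemma bn_closed : ∀ α ∈ bnΦ n, ∀ β ∈ bnΦ n, β - stdCoroot n α β • α ∈ bnΦ n := by
  rintro α hα β hβ
  have hnorm := refl_norm α β (bn_hnz α hα)
  rcases hα with hα | hα
  · have hc : stdCoroot n α β = dd α β := by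
      rw [stdCoroot_apply, o1_norm hα]; norm_num
    obtain ⟨k, hk⟩ := IntVec.dd_int (o1_int hα)
      (hβ.elim (fun h => o1_int h) (fun h => oShort_int h))
    rcases hβ with hβ | hβ
    · left
      rw [o1_char]
      refine ⟨?_, by rw [hnorm, o1_norm hβ]⟩
      rw [hc, hk]
      exact IntVec.sub_zsmul (o1_int hβ) (o1_int hα) k
    · right
      rw [oShort_char]
      refine ⟨?_, by rw [hnorm, oShort_norm hβ]⟩
      rw [hc, hk]
      exact IntVec.sub_zsmul (oShort_int hβ) (o1_int hα) k
  · obtain ⟨k, hk⟩ := IntVec.dd_int (oShort_int hα)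
      (hβ.elim (fun h => o1_int h) (fun h => oShort_int h))
    have hc : stdCoroot n α β = ((2 * k : ℤ) : ℚ) := by
      rw [stdCoroot_apply, oShort_norm hα, hk]; push_cast; ring
    rcases hβ with hβ | hβ
    · left
      rw [o1_char]
      refine ⟨?_, by rw [hnorm, o1_norm hβ]⟩
      rw [hc]
      exact IntVec.sub_zsmul (o1_int hβ) (oShort_int hα) (2 * k)
    · right
      rw [oShort_char]
      refine ⟨?_, by rw [hnorm, oShort_norm hβ]⟩
      rw [hc]
      exact IntVec.sub_zsmul (oShort_int hβ) (oShort_int hα) (2 * k)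

lemma o1_finite : (o1 n).Finite := by
  have hsub : o1 n ⊆ Set.range (fun p : Fin n × Fin n × Bool × Bool =>
      (if p.2.2.1 then (1:ℚ) else -1) • eVec n p.1 + (if p.2.2.2 then (1:ℚ) else -1) • eVec n p.2.1) := by
    rintro v ⟨i, j, hij, s, t, hs, ht, rfl⟩
    rcases hs with rfl | rfl <;> rcases ht with rfl | rfl
    · exact ⟨⟨i, j, true, true⟩, by simp⟩
    · exact ⟨⟨i, j, true, false⟩, by simp⟩
    · exact ⟨⟨i, j, false, true⟩, by simp⟩
    · exact ⟨⟨i, j, false, false⟩, by simp⟩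
  exact (Set.finite_range _).subset hsub

lemma oShort_finite : (oShort n).Finite := by
  have hsub : oShort n ⊆ Set.range (fun p : Fin n × Bool =>
      if p.2 then eVec n p.1 else -eVec n p.1) := by
    rintro v ⟨i, rfl | rfl⟩
    · exact ⟨⟨i, true⟩, by simp⟩
    · exact ⟨⟨i, false⟩, by simp⟩
  exact (Set.finite_range _).subset hsub

lemma oLong_finite : (oLong n).Finite := by
  have hsub : oLong n ⊆ Set.range (fun p : Fin n × Bool =>
      if p.2 then (2:ℚ) • eVec n p.1 else -((2:ℚ) • eVec n p.1)) := by
    rintro v ⟨i, rfl | rfl⟩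
    · exact ⟨⟨i, true⟩, by simp⟩
    · exact ⟨⟨i, false⟩, by simp⟩
  exact (Set.finite_range _).subset hsub

lemma cn_finite : (cnΦ n).Finite := Set.Finite.union o1_finite oLong_finite

lemma bn_finite : (bnΦ n).Finite := Set.Finite.union o1_finite oShort_finite

end QC
namespace QC

variable {n : ℕ}

lemma stdCoroot_o1 {β : Fin n → ℚ} (hβ : β ∈ o1 n) (v : Fin n → ℚ) :
    stdCoroot n β v = dd β v := by
  rw [stdCoroot_apply, o1_norm hβ]; norm_num

lemma stdCoroot_sub (i j : Fin n) (hij : i ≠ j) (v : Fin n → ℚ) :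
    stdCoroot n (eVec n i - eVec n j) v = v i - v j := by
  have hm : eVec n i - eVec n j = (1:ℚ) • eVec n i + (-1:ℚ) • eVec n j := by module
  rw [hm, stdCoroot_o1 ⟨i, j, hij, 1, -1, Or.inl rfl, Or.inr rfl, rfl⟩, dd_pm_left]
  ring

lemma stdCoroot_add (i j : Fin n) (hij : i ≠ j) (v : Fin n → ℚ) :
    stdCoroot n (eVec n i + eVec n j) v = v i + v j := by
  have hm : eVec n i + eVec n j = (1:ℚ) • eVec n i + (1:ℚ) • eVec n j := by module
  rw [hm, stdCoroot_o1 ⟨i, j, hij, 1, 1, Or.inl rfl, Or.inl rfl, rfl⟩, dd_pm_left]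
  ring

lemma stdCoroot_long (i : Fin n) (v : Fin n → ℚ) :
    stdCoroot n ((2:ℚ) • eVec n i) v = v i := by
  rw [stdCoroot_apply, dd_smul_left, dd_smul_left, dd_smul_right, dd_eVec_self, dd_eVec_left]
  ring

lemma stdCoroot_short (i : Fin n) (v : Fin n → ℚ) :
    stdCoroot n (eVec n i) v = 2 * v i := by
  rw [stdCoroot_apply, dd_eVec_self, dd_eVec_left]; norm_num

lemma mem_o1_sub {i j : Fin n} (hij : i ≠ j) : eVec n i - eVec n j ∈ o1 n := by
  refine ⟨i, j, hij, 1, -1, Or.inl rfl, Or.inr rfl, by module⟩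

lemma mem_o1_add {i j : Fin n} (hij : i ≠ j) : eVec n i + eVec n j ∈ o1 n := by
  refine ⟨i, j, hij, 1, 1, Or.inl rfl, Or.inl rfl, by module⟩

lemma mem_oLong (i : Fin n) : (2:ℚ) • eVec n i ∈ oLong n := ⟨i, Or.inl rfl⟩

lemma mem_oShort (i : Fin n) : eVec n i ∈ oShort n := ⟨i, Or.inl rfl⟩

/-- dot products of `o1` roots with `m • e_{i0}` -/
lemma val_o1_e (i0 : Fin n) (m : ℚ) {β : Fin n → ℚ} (hβ : β ∈ o1 n) :
    dd β (m • eVec n i0) = m ∨ dd β (m • eVec n i0) = -m ∨ dd β (m • eVec n i0) = 0 := by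
  obtain ⟨i, j, hij, s, t, hs, ht, rfl⟩ := hβ
  rw [dd_pm_left]
  have he : ∀ l : Fin n, (m • eVec n i0) l = if l = i0 then m else 0 := by
    intro l
    by_cases hl : l = i0
    · subst hl; simp [eVec_same]
    · simp [eVec_ne hl, hl]
  rw [he, he]
  by_cases h1 : i = i0 <;> by_cases h2 : j = i0 <;>
    rcases hs with rfl | rfl <;> rcases ht with rfl | rfl <;>
    simp_all <;> tauto
  
/-- dot products of `o1` roots with the constant vector `m` -/
lemma val_o1_ones (m : ℚ) {β : Fin n → ℚ} (hβ : β ∈ o1 n) :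
    dd β (fun _ => m) = 2 * m ∨ dd β (fun _ => m) = -(2 * m) ∨ dd β (fun _ => m) = 0 := by
  obtain ⟨i, j, hij, s, t, hs, ht, rfl⟩ := hβ
  rw [dd_pm_left]
  rcases hs with rfl | rfl <;> rcases ht with rfl | rfl
  · left; ring
  · right; right; ring
  · right; right; ring
  · right; left; ring

lemma val_long_e (i0 : Fin n) (m : ℚ) {β : Fin n → ℚ} (hβ : β ∈ oLong n) :
    dd β (m • eVec n i0) = 2 * m ∨ dd β (m • eVec n i0) = -(2 * m) ∨
      dd β (m • eVec n i0) = 0 := by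
  obtain ⟨i, rfl | rfl⟩ := hβ <;>
    simp only [dd_neg_left, dd_smul_left, dd_smul_right, dd_eVec_left]
  · by_cases hl : i = i0
    · subst hl; rw [eVec_same]; left; ring
    · rw [eVec_ne hl]; right; right; ring
  · by_cases hl : i = i0
    · subst hl; rw [eVec_same]; right; left; ring
    · rw [eVec_ne hl]; right; right; ring

lemma val_long_ones (m : ℚ) {β : Fin n → ℚ} (hβ : β ∈ oLong n) :
    dd β (fun _ => m) = 2 * m ∨ dd β (fun _ => m) = -(2 * m) ∨ dd β (fun _ => m) = 0 := by
  obtain ⟨i, rfl | rfl⟩ := hβ <;>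
    simp only [dd_neg_left, dd_smul_left, dd_eVec_left]
  · left; norm_num [dd_eVec_left]
  · right; left; norm_num [dd_eVec_left]

lemma val_short_e (i0 : Fin n) (m : ℚ) {β : Fin n → ℚ} (hβ : β ∈ oShort n) :
    dd β (m • eVec n i0) = m ∨ dd β (m • eVec n i0) = -m ∨ dd β (m • eVec n i0) = 0 := by
  obtain ⟨i, rfl | rfl⟩ := hβ <;>
    simp only [dd_neg_left, dd_smul_right, dd_eVec_left]
  · by_cases hl : i = i0
    · subst hl; rw [eVec_same]; left; ring
    · rw [eVec_ne hl]; right; right; ring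
  · by_cases hl : i = i0
    · subst hl; rw [eVec_same]; right; left; ring
    · rw [eVec_ne hl]; right; right; ring

lemma val_short_ones (m : ℚ) {β : Fin n → ℚ} (hβ : β ∈ oShort n) :
    dd β (fun _ => m) = m ∨ dd β (fun _ => m) = -m := by
  obtain ⟨i, rfl | rfl⟩ := hβ <;> simp only [dd_neg_left, dd_eVec_left]
  · left; trivial
  · right; trivial

/-- abstract reverse-direction lemma -/
lemma rev_aux {Φ : Set (Fin n → ℚ)} (hfin : Φ.Finite)
    (hnz : ∀ α ∈ Φ, dd α α ≠ 0)
    (hcl : ∀ α ∈ Φ, ∀ β ∈ Φ, β - stdCoroot n α β • α ∈ Φ)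
    (χ : Fin n → ℚ)
    (hval : ∀ α ∈ Φ, ∀ β ∈ Φ, dd β β = dd α α → dd α χ ≠ 0 →
      dd β χ = dd α χ ∨ dd β χ = -dd α χ ∨ dd β χ = 0) :
    IsQuasiConstant Φ (stdCoroot n) χ := by
  intro α hα hne σ hσ
  obtain ⟨hiso, hmaps⟩ := weyl_isom_maps hfin hnz hcl σ hσ
  have hαα := hnz α hα
  have hddne : dd α χ ≠ 0 := by
    intro h0
    apply hne
    rw [stdCoroot_apply, h0, mul_zero]
  have hsymm_iso : ∀ x y, dd (σ.symm x) (σ.symm y) = dd x y := by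
    intro x y
    rw [← hiso (σ.symm x) (σ.symm y), σ.apply_symm_apply, σ.apply_symm_apply]
  have h2 : dd α (σ.symm χ) = dd (σ α) χ := by
    rw [← hsymm_iso (σ α) χ, σ.symm_apply_apply]
  have hσα : σ α ∈ Φ := hmaps hα
  have hnorm : dd (σ α) (σ α) = dd α α := hiso α α
  have hco : coact σ (stdCoroot n α) χ = 2 / dd α α * dd (σ α) χ := by
    rw [coact_apply, stdCoroot_apply, h2]
  rw [hco, stdCoroot_apply]
  have hc2 : 2 / dd α α ≠ 0 := by
    intro h; rw [div_eq_zero_iff] at h; rcases h with h | h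
    · norm_num at h
    · exact hαα h
  rw [mul_div_mul_left _ _ hc2]
  rcases hval α hα (σ α) hσα hnorm hddne with h | h | h
  · rw [h, div_self hddne]
    right; right; rfl
  · rw [h, neg_div, div_self hddne]
    left; rfl
  · rw [h, zero_div]
    right; left; rfl

end QC
namespace QC

variable {n : ℕ}

lemma combine {x a b : ℚ} (ha : a = x ∨ a = -x ∨ a = 0) (hb : b = x ∨ b = -x ∨ b = 0)
    (hane : a ≠ 0) : b = a ∨ b = -a ∨ b = 0 := by
  rcases ha with ha | ha | ha
  · rcases hb with hb | hb | hb <;> rw [ha, hb] <;> norm_num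
  · rcases hb with hb | hb | hb <;> rw [ha, hb] <;> norm_num
  · exact absurd ha hane

lemma qc_C_e (i0 : Fin n) (m : ℚ) :
    IsQuasiConstant (cnΦ n) (stdCoroot n) (m • eVec n i0) := by
  apply rev_aux cn_finite cn_hnz cn_closed
  intro α hα β hβ hnorm hane
  rcases hα with hα | hα <;> rcases hβ with hβ | hβ
  · exact combine (val_o1_e i0 m hα) (val_o1_e i0 m hβ) hane
  · rw [o1_norm hα, oLong_norm hβ] at hnorm; norm_num at hnorm
  · rw [oLong_norm hα, o1_norm hβ] at hnorm; norm_num at hnorm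
  · exact combine (val_long_e i0 m hα) (val_long_e i0 m hβ) hane

lemma qc_C_ones (m : ℚ) :
    IsQuasiConstant (cnΦ n) (stdCoroot n) (fun _ => m) := by
  apply rev_aux cn_finite cn_hnz cn_closed
  intro α hα β hβ _ hane
  have hv : ∀ γ, γ ∈ cnΦ n → dd γ (fun _ => m) = 2 * m ∨ dd γ (fun _ => m) = -(2 * m) ∨
      dd γ (fun _ => m) = 0 := by
    rintro γ (hγ | hγ)
    · exact val_o1_ones m hγ
    · exact val_long_ones m hγ
  exact combine (hv α hα) (hv β hβ) hane

lemma qc_B_e (i0 : Fin n) (m : ℚ) :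
    IsQuasiConstant (bnΦ n) (stdCoroot n) (m • eVec n i0) := by
  apply rev_aux bn_finite bn_hnz bn_closed
  intro α hα β hβ _ hane
  have hv : ∀ γ, γ ∈ bnΦ n → dd γ (m • eVec n i0) = m ∨ dd γ (m • eVec n i0) = -m ∨
      dd γ (m • eVec n i0) = 0 := by
    rintro γ (hγ | hγ)
    · exact val_o1_e i0 m hγ
    · exact val_short_e i0 m hγ
  exact combine (hv α hα) (hv β hβ) hane

lemma qc_B_ones (m : ℚ) :
    IsQuasiConstant (bnΦ n) (stdCoroot n) (fun _ => m) := by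
  apply rev_aux bn_finite bn_hnz bn_closed
  intro α hα β hβ hnorm hane
  rcases hα with hα | hα <;> rcases hβ with hβ | hβ
  · exact combine (val_o1_ones m hα) (val_o1_ones m hβ) hane
  · rw [o1_norm hα, oShort_norm hβ] at hnorm; norm_num at hnorm
  · rw [oShort_norm hα, o1_norm hβ] at hnorm; norm_num at hnorm
  · refine combine ((val_short_ones m hα).imp id fun h => Or.inl h)
      ((val_short_ones m hβ).imp id fun h => Or.inl h) hane

end QC
namespace QC

variable {n : ℕ}

lemma chain_mono {f : Fin n → ℚ}
    (h : ∀ k : ℕ, (hk : k + 1 < n) → f ⟨k + 1, hk⟩ ≤ f ⟨k, by omega⟩) :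
    ∀ a b : Fin n, a ≤ b → f b ≤ f a := by
  have key : ∀ d a : ℕ, ∀ (h1 : a < n) (h2 : a + d < n), f ⟨a + d, h2⟩ ≤ f ⟨a, h1⟩ := by
    intro d
    induction d with
    | zero => intro a h1 h2; exact le_of_eq (by congr)
    | succ d ih =>
      intro a h1 h2
      have h3 : a + d < n := by omega
      have step : f ⟨a + (d + 1), h2⟩ ≤ f ⟨a + d, h3⟩ := by
        have := h (a + d) (by omega)
        have e1 : (⟨a + d + 1, by omega⟩ : Fin n) = ⟨a + (d + 1), h2⟩ := by
          apply Fin.ext; simp; omega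
        rw [e1] at this
        exact this
      exact step.trans (ih a h1 h3)
  intro a b hab
  have hb : b = ⟨a.val + (b.val - a.val), by omega⟩ := by
    apply Fin.ext; simp; omega
  rw [hb]
  exact key (b.val - a.val) a.val a.isLt (by omega)

lemma mem_deltaA (k : ℕ) (hk : k + 1 < n) :
    eVec n ⟨k, by omega⟩ - eVec n ⟨k + 1, hk⟩ ∈ deltaA n :=
  ⟨⟨k, by omega⟩, ⟨k + 1, hk⟩, rfl, rfl⟩

lemma fin_ne_of_val_ne {a b : Fin n} (h : (a : ℕ) ≠ (b : ℕ)) : a ≠ b :=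
  fun he => h (congrArg Fin.val he)

/-- common part of the forward direction: from dominance + quasi-constancy conclusions,
assuming monotonicity, nonnegativity and the "all values in {0, χ i0}" fact. -/
lemma fwd_common (hn : 2 ≤ n) {χ : Fin n → ℚ} {Φ : Set (Fin n → ℚ)}
    (hΦo1 : o1 n ⊆ Φ)
    (hqc : IsQuasiConstant Φ (stdCoroot n) χ)
    (hmono : ∀ a b : Fin n, a ≤ b → χ b ≤ χ a)
    (hnonneg : ∀ j, 0 ≤ χ j)
    (h0pos : 0 < χ (⟨0, Nat.lt_of_lt_of_le Nat.two_pos hn⟩ : Fin n))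
    (hval : ∀ j, χ j = 0 ∨ χ j = χ (⟨0, Nat.lt_of_lt_of_le Nat.two_pos hn⟩ : Fin n)) :
    (χ = fun j => if j = (⟨0, Nat.lt_of_lt_of_le Nat.two_pos hn⟩ : Fin n) then χ (⟨0, Nat.lt_of_lt_of_le Nat.two_pos hn⟩ : Fin n) else 0) ∨
    (χ = fun _ => χ (⟨0, Nat.lt_of_lt_of_le Nat.two_pos hn⟩ : Fin n)) := by
  set i0 : Fin n := ⟨0, by omega⟩ with hi0
  set i1 : Fin n := ⟨1, by omega⟩ with hi1
  set il : Fin n := ⟨n - 1, by omega⟩ with hil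
  rcases hval i1 with h1 | h1
  · -- χ i1 = 0 : χ is supported at i0
    left
    funext j
    by_cases hj : j = i0
    · subst hj; simp
    · have hj1 : i1 ≤ j := by
        rw [Fin.le_def]
        have : (j : ℕ) ≠ 0 := fun hc => hj (Fin.ext hc)
        simp [hi1]; omega
      have := hmono i1 j hj1
      have := hnonneg j
      simp [hj]
      linarith
  · -- χ i1 = χ i0
    rcases hval il with h2 | h2
    · -- χ il = 0 : contradiction
      exfalso
      have h01 : i0 ≠ i1 := fin_ne_of_val_ne (by simp [hi0, hi1])
      have h1l : i1 ≠ il := by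
        intro he
        rw [he, h2] at h1
        rw [← h1] at h0pos
        exact lt_irrefl _ h0pos
      have h0l : i0 ≠ il := fin_ne_of_val_ne (by simp [hi0, hil]; omega)
      set α : Fin n → ℚ := eVec n i0 + eVec n i1 with hα
      have hαΦ : α ∈ Φ := hΦo1 (mem_o1_add h01)
      have hco : stdCoroot n α χ = χ i0 + χ i1 := stdCoroot_add i0 i1 h01 χ
      have hcone : stdCoroot n α χ ≠ 0 := by rw [hco, h1]; intro hc; linarith
      set β : Fin n → ℚ := eVec n i1 - eVec n il with hβ
      have hβn : dd β β ≠ 0 := by rw [o1_norm (mem_o1_sub h1l)]; norm_num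
      have hσW := reflE_mem (Φ := Φ) (hΦo1 (mem_o1_sub h1l)) hβn
      have key := hqc α hαΦ hcone (reflE n β hβn) hσW
      have hc : stdCoroot n β χ = χ i0 := by
        rw [hβ, stdCoroot_sub i1 il h1l, h2, h1, sub_zero]
      have hev : coact (reflE n β hβn) (stdCoroot n α) χ = χ i0 := by
        rw [coact_apply, reflE_symm_apply, hα, stdCoroot_add i0 i1 h01]
        have hβ0 : β i0 = 0 := by
          rw [hβ]
          simp [eVec_ne h01, eVec_ne h0l]
        have hβ1 : β i1 = 1 := by
          rw [hβ]
          simp [eVec_same, eVec_ne h1l]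
        simp only [Pi.sub_apply, Pi.smul_apply, smul_eq_mul, hβ0, hβ1, hc]
        rw [h1]
        ring
      rw [hev, hco, h1] at key
      have hne2 : χ i0 + χ i0 ≠ 0 := by intro hc'; linarith
      simp only [Set.mem_insert_iff, Set.mem_singleton_iff] at key
      rcases key with key | key | key <;> rw [div_eq_iff hne2] at key <;> linarith
    · -- χ il = χ i0 : χ constant
      right
      funext j
      have hjl : j ≤ il := by
        rw [Fin.le_def]
        have := j.isLt
        simp [hil]; omega
      have h0j : i0 ≤ j := by
        rw [Fin.le_def]
        simp [hi0]
      have ha2 := hmono j il hjl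
      have hb2 := hmono i0 j h0j
      rw [h2] at ha2
      linarith

end QC
namespace QC

variable {n : ℕ}

lemma toNat_cast_rat {k : ℤ} (hk : 0 < k) : ((k.toNat : ℕ) : ℚ) = (k : ℚ) := by
  have h1 : ((k.toNat : ℕ) : ℤ) = k := Int.toNat_of_nonneg hk.le
  exact_mod_cast congrArg (fun z : ℤ => (z : ℚ)) h1

lemma fwd_C (hn : 2 ≤ n) {χ : Fin n → ℚ}
    (hlat : χ ∈ weightLattice (cnΦ n) (stdCoroot n)) (hne : χ ≠ 0)
    (hdom : IsDominant (stdCoroot n) (cnΔ n) χ)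
    (hqc : IsQuasiConstant (cnΦ n) (stdCoroot n) χ) :
    ∃ m : ℕ, 0 < m ∧
      (χ = (m : ℚ) • eVec n ⟨0, Nat.lt_of_lt_of_le Nat.two_pos hn⟩ ∨ χ = (m : ℚ) • fun _ => (1 : ℚ)) := by
  set i0 : Fin n := ⟨0, by omega⟩ with hi0
  set il : Fin n := ⟨n - 1, by omega⟩ with hil
  have hmono : ∀ a b : Fin n, a ≤ b → χ b ≤ χ a := by
    apply chain_mono
    intro k hk
    have hmem : eVec n ⟨k, by omega⟩ - eVec n ⟨k + 1, hk⟩ ∈ cnΔ n :=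
      Or.inl (mem_deltaA k hk)
    have h := hdom _ hmem
    rw [stdCoroot_sub _ _ (fin_ne_of_val_ne (by simp))] at h
    linarith
  have hlast : 0 ≤ χ il := by
    have hmem : (2 : ℚ) • eVec n il ∈ cnΔ n := Or.inr ⟨il, rfl, rfl⟩
    have h := hdom _ hmem
    rwa [stdCoroot_long] at h
  have hnonneg : ∀ j, 0 ≤ χ j := by
    intro j
    have hj : j ≤ il := by
      rw [Fin.le_def]; have := j.isLt; simp [hil]; omega
    have := hmono j il hj
    linarith
  have h0pos : 0 < χ i0 := by
    rcases lt_or_ge 0 (χ i0) with h | h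
    · exact h
    · exfalso
      apply hne
      funext j
      have h0j : i0 ≤ j := by rw [Fin.le_def]; simp [hi0]
      have := hmono i0 j h0j
      have := hnonneg j
      have : χ j = 0 := by linarith
      simpa using this
  have hval : ∀ j, χ j = 0 ∨ χ j = χ i0 := by
    intro j
    by_cases hj : j = i0
    · right; rw [hj]
    · have h0j : i0 ≠ j := fun h => hj h.symm
      set α : Fin n → ℚ := (2 : ℚ) • eVec n i0 with hα
      have hαΦ : α ∈ cnΦ n := Or.inr (mem_oLong i0)
      have hcov : stdCoroot n α χ = χ i0 := stdCoroot_long i0 χ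
      have hcone : stdCoroot n α χ ≠ 0 := by rw [hcov]; exact ne_of_gt h0pos
      have hβo1 : eVec n i0 - eVec n j ∈ o1 n := mem_o1_sub h0j
      have hβn : dd (eVec n i0 - eVec n j) (eVec n i0 - eVec n j) ≠ 0 := by
        rw [o1_norm hβo1]; norm_num
      have key := hqc α hαΦ hcone (reflE n _ hβn) (reflE_mem (Or.inl hβo1) hβn)
      have hev : coact (reflE n _ hβn) (stdCoroot n α) χ = χ j := by
        rw [coact_apply, reflE_symm_apply, hα, stdCoroot_long, stdCoroot_sub i0 j h0j]
        have e1 : (eVec n i0 - eVec n j) i0 = 1 := by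
          simp [eVec_same, eVec_ne h0j]
        simp only [Pi.sub_apply, Pi.smul_apply, smul_eq_mul, e1]
        ring
      rw [hev, hcov] at key
      simp only [Set.mem_insert_iff, Set.mem_singleton_iff] at key
      rcases key with key | key | key
      · exfalso
        rw [div_eq_iff (ne_of_gt h0pos)] at key
        have := hnonneg j
        linarith
      · left
        rcases div_eq_zero_iff.1 key with h | h
        · exact h
        · exact absurd h (ne_of_gt h0pos)
      · right
        rw [div_eq_iff (ne_of_gt h0pos)] at key
        linarith
  obtain ⟨k, hk⟩ := hlat ((2 : ℚ) • eVec n i0) (Or.inr (mem_oLong i0))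
  rw [stdCoroot_long] at hk
  have kpos : 0 < k := by
    have : (0 : ℚ) < (k : ℚ) := by rw [← hk]; exact h0pos
    exact_mod_cast this
  have hcast : ((k.toNat : ℕ) : ℚ) = χ i0 := by rw [hk]; exact toNat_cast_rat kpos
  rcases fwd_common hn Set.subset_union_left hqc hmono hnonneg h0pos hval with hform | hform
  · refine ⟨k.toNat, by omega, Or.inl ?_⟩
    funext j
    rw [hform]
    by_cases hj : j = i0
    · subst hj; simp [eVec_same, hcast]; exact if_pos rfl
    · simp [hj, eVec_ne hj]; intro h; exact absurd h hj
  · refine ⟨k.toNat, by omega, Or.inr ?_⟩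
    funext j
    rw [hform]
    simp [hcast]; rfl

lemma fwd_B (hn : 2 ≤ n) {χ : Fin n → ℚ}
    (hlat : χ ∈ weightLattice (bnΦ n) (stdCoroot n)) (hne : χ ≠ 0)
    (hdom : IsDominant (stdCoroot n) (bnΔ n) χ)
    (hqc : IsQuasiConstant (bnΦ n) (stdCoroot n) χ) :
    ∃ m : ℕ, 0 < m ∧
      (χ = (m : ℚ) • eVec n ⟨0, Nat.lt_of_lt_of_le Nat.two_pos hn⟩ ∨ χ = (m : ℚ) • fun _ => (1 / 2 : ℚ)) := by
  set i0 : Fin n := ⟨0, by omega⟩ with hi0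
  set i1 : Fin n := ⟨1, by omega⟩ with hi1
  set il : Fin n := ⟨n - 1, by omega⟩ with hil
  have hmono : ∀ a b : Fin n, a ≤ b → χ b ≤ χ a := by
    apply chain_mono
    intro k hk
    have hmem : eVec n ⟨k, by omega⟩ - eVec n ⟨k + 1, hk⟩ ∈ bnΔ n :=
      Or.inl (mem_deltaA k hk)
    have h := hdom _ hmem
    rw [stdCoroot_sub _ _ (fin_ne_of_val_ne (by simp))] at h
    linarith
  have hlast : 0 ≤ χ il := by
    have hmem : eVec n il ∈ bnΔ n := Or.inr ⟨il, rfl, rfl⟩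
    have h := hdom _ hmem
    rw [stdCoroot_short] at h
    linarith
  have hnonneg : ∀ j, 0 ≤ χ j := by
    intro j
    have hj : j ≤ il := by
      rw [Fin.le_def]; have := j.isLt; simp [hil]; omega
    have := hmono j il hj
    linarith
  have h0pos : 0 < χ i0 := by
    rcases lt_or_ge 0 (χ i0) with h | h
    · exact h
    · exfalso
      apply hne
      funext j
      have h0j : i0 ≤ j := by rw [Fin.le_def]; simp [hi0]
      have := hmono i0 j h0j
      have := hnonneg j
      have : χ j = 0 := by linarith
      simpa using this
  have hval : ∀ j, χ j = 0 ∨ χ j = χ i0 := by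
    intro j
    by_cases hj : j = i0
    · right; rw [hj]
    · have h0j : i0 ≠ j := fun h => hj h.symm
      set α : Fin n → ℚ := eVec n i0 with hα
      have hαΦ : α ∈ bnΦ n := Or.inr (mem_oShort i0)
      have hcov : stdCoroot n α χ = 2 * χ i0 := stdCoroot_short i0 χ
      have hcone : stdCoroot n α χ ≠ 0 := by rw [hcov]; intro hc; linarith
      have hβo1 : eVec n i0 - eVec n j ∈ o1 n := mem_o1_sub h0j
      have hβn : dd (eVec n i0 - eVec n j) (eVec n i0 - eVec n j) ≠ 0 := by
        rw [o1_norm hβo1]; norm_num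
      have key := hqc α hαΦ hcone (reflE n _ hβn) (reflE_mem (Or.inl hβo1) hβn)
      have hev : coact (reflE n _ hβn) (stdCoroot n α) χ = 2 * χ j := by
        rw [coact_apply, reflE_symm_apply, hα, stdCoroot_short, stdCoroot_sub i0 j h0j]
        have e1 : (eVec n i0 - eVec n j) i0 = 1 := by
          simp [eVec_same, eVec_ne h0j]
        simp only [Pi.sub_apply, Pi.smul_apply, smul_eq_mul, e1]
        ring
      rw [hev, hcov] at key
      have h2ne : 2 * χ i0 ≠ 0 := by intro hc; linarith
      simp only [Set.mem_insert_iff, Set.mem_singleton_iff] at key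
      rcases key with key | key | key
      · exfalso
        rw [div_eq_iff h2ne] at key
        have := hnonneg j
        linarith
      · left
        rcases div_eq_zero_iff.1 key with h | h
        · linarith
        · exact absurd h h2ne
      · right
        rw [div_eq_iff h2ne] at key
        linarith
  rcases fwd_common hn Set.subset_union_left hqc hmono hnonneg h0pos hval with hform | hform
  · -- χ = χ i0 · e_{i0}
    have h01 : i0 ≠ i1 := fin_ne_of_val_ne (by simp [hi0, hi1])
    obtain ⟨k, hk⟩ := hlat (eVec n i0 - eVec n i1) (Or.inl (mem_o1_sub h01))
    rw [stdCoroot_sub i0 i1 h01] at hk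
    have hχ1 : χ i1 = 0 := by
      rw [hform]
      simp [Ne.symm h01]; intro h; exact absurd h (Ne.symm h01)
    rw [hχ1, sub_zero] at hk
    have kpos : 0 < k := by
      have : (0 : ℚ) < (k : ℚ) := by rw [← hk]; exact h0pos
      exact_mod_cast this
    have hcast : ((k.toNat : ℕ) : ℚ) = χ i0 := by rw [hk]; exact toNat_cast_rat kpos
    refine ⟨k.toNat, by omega, Or.inl ?_⟩
    funext j
    rw [hform]
    by_cases hj : j = i0
    · subst hj; simp [eVec_same, hcast]; exact if_pos rfl
    · simp [hj, eVec_ne hj]; intro h; exact absurd h hj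
  · -- χ constant
    obtain ⟨k, hk⟩ := hlat (eVec n i0) (Or.inr (mem_oShort i0))
    rw [stdCoroot_short] at hk
    have kpos : 0 < k := by
      have : (0 : ℚ) < (k : ℚ) := by rw [← hk]; linarith
      exact_mod_cast this
    have hcast : ((k.toNat : ℕ) : ℚ) = 2 * χ i0 := by rw [hk]; exact toNat_cast_rat kpos
    refine ⟨k.toNat, by omega, Or.inr ?_⟩
    funext j
    rw [hform]
    simp only [Pi.smul_apply, smul_eq_mul]
    rw [hcast]
    ring
end QC
/-- Lemma 3.4 of the paper. In types `Cₙ` and `Bₙ` (`n ≥ 2`), a nonzero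
`Δ`-dominant element `χ` of the weight lattice is quasi-constant if and only if `χ` is a
positive integer multiple of one of the two fundamental weights corresponding to the
extremities of the Dynkin diagram: `η(e₁−e₂) = e₁` and `η(2eₙ) = e₁ + ⋯ + eₙ` in type
`Cₙ`, and `η(e₁−e₂) = e₁` and `η(eₙ) = (e₁ + ⋯ + eₙ)/2` in type `Bₙ`. -/
theorem statement6 (n : ℕ) (hn : 2 ≤ n) :
    (∀ χ : Fin n → ℚ, χ ∈ QC.weightLattice (QC.cnΦ n) (QC.stdCoroot n) → χ ≠ 0 →
      QC.IsDominant (QC.stdCoroot n) (QC.cnΔ n) χ →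
      (QC.IsQuasiConstant (QC.cnΦ n) (QC.stdCoroot n) χ ↔
        ∃ m : ℕ, 0 < m ∧
          (χ = (m : ℚ) • QC.eVec n ⟨0, by omega⟩ ∨
           χ = (m : ℚ) • fun _ => (1 : ℚ)))) ∧
    (∀ χ : Fin n → ℚ, χ ∈ QC.weightLattice (QC.bnΦ n) (QC.stdCoroot n) → χ ≠ 0 →
      QC.IsDominant (QC.stdCoroot n) (QC.bnΔ n) χ →
      (QC.IsQuasiConstant (QC.bnΦ n) (QC.stdCoroot n) χ ↔
        ∃ m : ℕ, 0 < m ∧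
          (χ = (m : ℚ) • QC.eVec n ⟨0, by omega⟩ ∨
           χ = (m : ℚ) • fun _ => (1 / 2 : ℚ)))) := by
  constructor
  · intro χ hlat hne hdom
    constructor
    · exact fun hqc => QC.fwd_C hn hlat hne hdom hqc
    · rintro ⟨m, _, hform | hform⟩
      · rw [hform]; exact QC.qc_C_e _ _
      · have he : ((m : ℚ) • (fun _ => (1 : ℚ)) : Fin n → ℚ) = fun _ => (m : ℚ) := by
          funext j; simp
        rw [hform, he]
        exact QC.qc_C_ones _
  · intro χ hlat hne hdom
    constructor
    · exact fun hqc => QC.fwd_B hn hlat hne hdom hqc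
    · rintro ⟨m, _, hform | hform⟩
      · rw [hform]; exact QC.qc_B_e _ _
      · have he : ((m : ℚ) • (fun _ => (1 / 2 : ℚ)) : Fin n → ℚ) = fun _ => (m : ℚ) / 2 := by
          funext j; simp; ring
        rw [hform, he]
        exact QC.qc_B_ones _
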